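/- Let f and g be train track self-morphisms of Γ with respect to G := G(f), where g induces an automorphism of π₁(Γ) and is gate-stable. Then for every vertex v of Γ, the gate-Whitehead-graph Wh_G^v(f) is a subgraph of both Wh_G^v(f∘g) and Wh_G^v(g∘f). -/

import Mathlib

/-!
Common combinatorial framework for train tracks (Coulbois–Lustig,
"Long turns, INP's and index for free group automorphisms").

A graph is finite, with an involutive fixed-point-free edge reversal `bar`.
Edge paths are lists of oriented edges.  A graph map sends vertices to
vertices and edges to edge paths (compatibly with reversal and initial
vertices).  Gate structures, legal paths, train track morphisms, long turns,
legalizing maps, the intrinsic gate structure, Whitehead graphs and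
transition matrices are defined combinatorially below.
-/

structure TTGraph where
  V : Type
  E : Type
  decV : DecidableEq V
  decE : DecidableEq E
  fintV : Fintype V
  fintE : Fintype E
  init : E → V
  bar : E → E
  bar_bar : ∀ e, bar (bar e) = e
  bar_ne : ∀ e, bar e ≠ e

namespace TTGraph

variable (G : TTGraph)

/-- terminal vertex of an oriented edge -/
def ter (e : G.E) : G.V := G.init (G.bar e)

/-- `l` is an edge path: consecutive edges are concatenable -/
def IsPath (l : List G.E) : Prop :=
  l.Chain' fun e e' => G.ter e = G.init e'

end TTGraph

/-- A graph map: vertices to vertices, edges to edge paths. -/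
structure GraphMap (G G' : TTGraph) where
  vmap : G.V → G'.V
  emap : G.E → List G'.E
  emap_path : ∀ e, G'.IsPath (emap e)
  emap_bar : ∀ e, emap (G.bar e) = (emap e).reverse.map G'.bar
  emap_head : ∀ e d, (emap e).head? = some d → G'.init d = vmap (G.init e)

namespace GraphMap

variable {G G' : TTGraph}

/-- image of an edge path under a graph map -/
def mapPath (f : GraphMap G G') (l : List G.E) : List G'.E := l.flatMap f.emap

/-- iterated image of an edge path under a graph self-map: `f^t` applied to `l` -/
def iterMap (f : GraphMap G G) (t : ℕ) : List G.E → List G.E := f.mapPath^[t]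

end GraphMap

/-- `h` is the composition `g ∘ f` of graph maps. -/
def IsComp {G G' G'' : TTGraph} (h : GraphMap G G'') (g : GraphMap G' G'') (f : GraphMap G G') :
    Prop :=
  (∀ v, h.vmap v = g.vmap (f.vmap v)) ∧ ∀ e, h.emap e = (f.emap e).flatMap g.emap

/-- A gate structure: an equivalence relation on oriented edges, only relating
edges with a common initial vertex; classes are the gates. -/
structure GateStruct (G : TTGraph) where
  rel : G.E → G.E → Prop
  refl : ∀ e, rel e e
  symm : ∀ {e e'}, rel e e' → rel e' e
  trans : ∀ {a b c}, rel a b → rel b c → rel a c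
  same_init : ∀ {e e'}, rel e e' → G.init e = G.init e'

/-- A legal edge path: a path which never crosses an illegal turn
(the turn crossed between consecutive edges `e, e'` is `(bar e, e')`). -/
def Legal (G : TTGraph) (S : GateStruct G) (l : List G.E) : Prop :=
  G.IsPath l ∧ l.Chain' fun e e' => ¬ S.rel (G.bar e) e'

/-- A reduced edge path: no backtracking subpath. -/
def Reduced (G : TTGraph) (l : List G.E) : Prop :=
  l.Chain' fun e e' => e' ≠ G.bar e

/-- Train track morphism: no contracted edges, legal paths map to legal paths. -/
def IsTT {G G' : TTGraph} (S : GateStruct G) (S' : GateStruct G') (f : GraphMap G G') : Prop :=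
  (∀ e, f.emap e ≠ []) ∧ ∀ l, Legal G S l → Legal G' S' (f.mapPath l)

/-- Entry of the transition matrix: number of times `f(e)` crosses `e'` or its inverse. -/
def transEntry {G G' : TTGraph} (f : GraphMap G G') (e' : G'.E) (e : G.E) : ℕ :=
  letI := G'.decE
  (f.emap e).count e' + (f.emap e).count (G'.bar e')

/-- The transition matrix of a graph map, indexed by sections (orientations)
`pos`, `pos'` of the unoriented edge sets. -/
def transMatrix {G G' : TTGraph} (f : GraphMap G G') (pos : G.E → Bool) (pos' : G'.E → Bool) :
    Matrix {e : G'.E // pos' e = true} {e : G.E // pos e = true} ℕ :=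
  fun e' e => transEntry f e'.1 e.1

/-- A long turn: two non-trivial legal paths with common initial vertex and
distinct first edges. -/
def IsLongTurn (G : TTGraph) (S : GateStruct G) (γ γ' : List G.E) : Prop :=
  Legal G S γ ∧ Legal G S γ' ∧ γ ≠ [] ∧ γ' ≠ [] ∧
    ∀ d d', γ.head? = some d → γ'.head? = some d' → G.init d = G.init d' ∧ d ≠ d'

/-- An illegal long turn: the two initial edges lie in the same gate. -/
def IllegalLT (G : TTGraph) (S : GateStruct G) (γ γ' : List G.E) : Prop :=
  IsLongTurn G S γ γ' ∧ ∃ d d', γ.head? = some d ∧ γ'.head? = some d' ∧ S.rel d d'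

/-- The initial edges of the two paths lie in distinct gates (legal long turn condition). -/
def LegalHeads (G : TTGraph) (S : GateStruct G) (γ γ' : List G.E) : Prop :=
  ∀ d d', γ.head? = some d → γ'.head? = some d' → ¬ S.rel d d'

/-- `(δ, δ')` is the `F`-image of the long turn `(γ, γ')`: removing the maximal
common initial subpath `γ₀` of the two image paths leaves two non-trivial paths
with distinct first edges.  When such `δ, δ'` exist the long turn is `F`-long. -/
def IsLTImageF {G G' : TTGraph} (F : List G.E → List G'.E) (γ γ' : List G.E)
    (δ δ' : List G'.E) : Prop :=
  ∃ γ₀ : List G'.E, F γ = γ₀ ++ δ ∧ F γ' = γ₀ ++ δ' ∧ δ ≠ [] ∧ δ' ≠ [] ∧ δ.head? ≠ δ'.head?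

/-- A map of paths is legalizing: every illegal long turn which is `F`-long has
legal `F`-image. -/
def LegalizingF {G G' : TTGraph} (S : GateStruct G) (S' : GateStruct G')
    (F : List G.E → List G'.E) : Prop :=
  ∀ γ γ' δ δ', IllegalLT G S γ γ' → IsLTImageF F γ γ' δ δ' → LegalHeads G' S' δ δ'

/-- `Cb` is a cancellation bound for `F`: for any long turn, any common initial
subpath of the two images has length at most `Cb`. -/
def CancelBoundF {G G' : TTGraph} (S : GateStruct G) (F : List G.E → List G'.E) (Cb : ℕ) : Prop :=
  ∀ γ γ', IsLongTurn G S γ γ' → ∀ p, p <+: F γ → p <+: F γ' → p.length ≤ Cb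

/-- `F` is strongly `K`-expanding: every legal path of length at least `K` has
strictly longer image. -/
def StronglyExpandingF {G G' : TTGraph} (S : GateStruct G) (F : List G.E → List G'.E)
    (K : ℕ) : Prop :=
  ∀ γ, Legal G S γ → K ≤ γ.length → γ.length + 1 ≤ (F γ).length

/-- The intrinsic gate relation of a self-map `f`: two edges at a common vertex
are related iff some positive power of `f` maps them to edge paths with a
non-trivial common initial subpath (i.e. with the same first edge). -/
def IntrinsicRel {G : TTGraph} (f : GraphMap G G) (e e' : G.E) : Prop :=
  G.init e = G.init e' ∧
    ∃ t, 1 ≤ t ∧ ∃ d, (f.iterMap t [e]).head? = some d ∧ (f.iterMap t [e']).head? = some d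

/-- `f` is gate-stable with respect to `S`: it fixes every vertex and every gate. -/
def GateStable {G : TTGraph} (S : GateStruct G) (f : GraphMap G G) : Prop :=
  (∀ v, f.vmap v = v) ∧ ∀ e d, (f.emap e).head? = some d → S.rel e d

/-- `f` is expanding: every edge eventually has image of combinatorial length ≥ 2. -/
def ExpandingTT {G : TTGraph} (f : GraphMap G G) : Prop :=
  ∀ e, ∃ t, 1 ≤ t ∧ 2 ≤ (f.iterMap t [e]).length

/-- One step of the induced map `f^{LT_C}` on long turns of branch length `C`:
take the `f`-image and truncate both branches to length `C`. -/
def LTCstep {G : TTGraph} (f : GraphMap G G) (C : ℕ) (p q : List G.E × List G.E) : Prop :=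
  ∃ δ δ', IsLTImageF f.mapPath p.1 p.2 δ δ' ∧
    q.1 <+: δ ∧ q.2 <+: δ' ∧ q.1.length = C ∧ q.2.length = C

/-- `f` possesses a periodic INP: combinatorially, there is an illegal long turn
`(γ, γ')` and `t ≥ 1` such that `f^t` maps each branch over itself after a common
cancelled initial piece `ρ` (the INP is the subpath of `γ̄ ∘ γ'` joining the two
resulting fixed points of `f^t`). -/
def HasPeriodicINP {G : TTGraph} (S : GateStruct G) (f : GraphMap G G) : Prop :=
  ∃ γ γ' ρ t, 1 ≤ t ∧ IllegalLT G S γ γ' ∧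
    (ρ ++ γ) <+: f.iterMap t γ ∧ (ρ ++ γ') <+: f.iterMap t γ'

/-- The path `l` crosses over the gate turn represented by the edges `(a, b)`:
it contains a subpath `ē·e'` with `e` in the gate of `a` and `e'` in the gate of
`b` (or vice versa). -/
def CrossesGT {G : TTGraph} (S : GateStruct G) (l : List G.E) (a b : G.E) : Prop :=
  ∃ x y, [x, y] <:+: l ∧
    ((S.rel (G.bar x) a ∧ S.rel y b) ∨ (S.rel (G.bar x) b ∧ S.rel y a))

/-- Edge of the gate-Whitehead-graph of `f` at `v`, between the gates of the
edges `a` and `b` at `v`: some `f^t(e)` (`t ≥ 1`) crosses over this gate turn. -/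
def WhEdge {G : TTGraph} (S : GateStruct G) (f : GraphMap G G) (v : G.V) (a b : G.E) : Prop :=
  G.init a = v ∧ G.init b = v ∧ ∃ t, 1 ≤ t ∧ ∃ e, CrossesGT S (f.iterMap t [e]) a b

/-- All gate-Whitehead-graphs of `f` are connected. -/
def WhConnected {G : TTGraph} (S : GateStruct G) (f : GraphMap G G) : Prop :=
  ∀ v a b, G.init a = v → G.init b = v →
    Relation.ReflTransGen (fun x y => S.rel x y ∨ WhEdge S f v x y) a b

/-- The path map obtained by composing a list of graph self-maps (applied left to right). -/
def compPathFun {G : TTGraph} (l : List (GraphMap G G)) : List G.E → List G.E :=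
  l.foldl (fun F m => m.mapPath ∘ F) id

/-!
Every gate turn crossed by some `f^(t+1)(e)` is either crossed inside a single edge image
`f(c)`, or is the image under `Df` of a gate turn crossed by `f^t(e)`; so the gate turns of
`Wh(f)` form the smallest `Df`-invariant set containing the turns inside the edge images.
For `h = f ∘ g` and `h = g ∘ f` the gate turns crossed by the iterates of `h` form such a
set: the gate-stable `g` preserves every crossing of a gate turn, `f` sends it to a crossing
of its `Df`-image (`Df` is well defined on the intrinsic gates of `f`), and every turn inside
`f(c)` is crossed by `h(c)` when `h = g ∘ f`, and by `h(c')` with `c` or `c̄` in `g(c')`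
when `h = f ∘ g`.
-/

theorem List.pair_infix_flatMap {α β : Type*} {F : α → List β} (hF : ∀ c, F c ≠ []) {u w : β}
    {l : List α} (h : [u, w] <:+: l.flatMap F) :
    (∃ c ∈ l, [u, w] <:+: F c) ∨
      ∃ p q, [p, q] <:+: l ∧ (F p).getLast? = some u ∧ (F q).head? = some w := by
  induction l with
  | nil => simp at h
  | cons c r ih =>
    have split : [u, w] <:+: F c ∨ [u, w] <:+: r.flatMap F ∨
        ([u] <:+ F c ∧ [w] <+: r.flatMap F) := by
      rw [List.flatMap_cons, List.infix_append_iff] at h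
      rcases h with h | h | ⟨l₁, l₂, hl, hs, hp⟩
      · exact .inl h
      · exact .inr (.inl h)
      rcases l₁ with _ | ⟨x, _ | ⟨y, _ | ⟨z, l₁⟩⟩⟩ <;>
        simp only [List.nil_append, List.cons_append, List.cons.injEq, reduceCtorEq,
          and_false] at hl
      · exact .inr (.inl (hl ▸ hp).isInfix)
      · obtain ⟨rfl, rfl⟩ := hl
        exact .inr (.inr ⟨hs, hp⟩)
      · obtain ⟨rfl, rfl, rfl⟩ := hl
        exact .inl hs.isInfix
    rcases split with h | h | ⟨hs, hp⟩
    · exact .inl ⟨c, List.mem_cons_self, h⟩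
    · rcases ih h with ⟨c', hc', hin⟩ | ⟨p, q, hpq, hp, hq⟩
      · exact .inl ⟨c', List.mem_cons_of_mem c hc', hin⟩
      · exact .inr ⟨p, q, hpq.trans (List.suffix_cons c r).isInfix, hp, hq⟩
    · obtain _ | ⟨q, r'⟩ := r
      · simp at hp
      rw [List.flatMap_cons, List.singleton_prefix_iff_head?_eq_some,
        List.head?_append_of_ne_nil _ (hF q)] at hp
      exact .inr ⟨c, q, List.infix_append [] [c, q] r',
        List.singleton_suffix_iff_getLast?_eq_some.1 hs, hp⟩

namespace GraphMap

variable {G G' : TTGraph}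

@[simp]
theorem mapPath_singleton (f : GraphMap G G') (e : G.E) : f.mapPath [e] = f.emap e :=
  List.flatMap_singleton f.emap e

theorem iterMap_succ (f : GraphMap G G) (t : ℕ) (l : List G.E) :
    f.iterMap (t + 1) l = f.mapPath (f.iterMap t l) :=
  Function.iterate_succ_apply' f.mapPath t l

theorem head?_emap_bar (f : GraphMap G G') {x : G.E} {u : G'.E}
    (h : (f.emap x).getLast? = some u) : (f.emap (G.bar x)).head? = some (G'.bar u) := by
  rw [f.emap_bar, List.head?_map, List.head?_reverse, h, Option.map_some]

theorem exists_head?_emap (f : GraphMap G G') (hne : ∀ e, f.emap e ≠ []) (e : G.E) :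
    ∃ d, (f.emap e).head? = some d :=
  Option.ne_none_iff_exists'.1 (mt List.head?_eq_none_iff.1 (hne e))

theorem exists_getLast?_emap (f : GraphMap G G') (hne : ∀ e, f.emap e ≠ []) (e : G.E) :
    ∃ d, (f.emap e).getLast? = some d :=
  Option.ne_none_iff_exists'.1 (mt List.getLast?_eq_none_iff.1 (hne e))

theorem pair_infix_mapPath (f : GraphMap G G') (hne : ∀ e, f.emap e ≠ []) {x y : G.E}
    {l : List G.E} (h : [x, y] <:+: l) :
    ∃ u w, [u, w] <:+: f.mapPath l ∧
      (f.emap x).getLast? = some u ∧ (f.emap y).head? = some w := by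
  obtain ⟨u, hu⟩ := f.exists_getLast?_emap hne x
  obtain ⟨w, hw⟩ := f.exists_head?_emap hne y
  obtain ⟨α, hα⟩ := List.getLast?_eq_some_iff.1 hu
  obtain ⟨β, hβ⟩ := List.head?_eq_some_iff.1 hw
  have hxy : f.emap x ++ f.emap y <:+: f.mapPath l := by
    simpa [mapPath] using h.flatMap f.emap
  refine ⟨u, w, .trans ?_ hxy, hu, hw⟩
  rw [hα, hβ]
  simpa using List.infix_append α [u, w] β

theorem head?_iterMap_cons (f : GraphMap G G) (hne : ∀ e, f.emap e ≠ []) (s : ℕ) (x : G.E)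
    (r : List G.E) : (f.iterMap s (x :: r)).head? = (f.iterMap s [x]).head? := by
  induction s generalizing x r with
  | zero => rfl
  | succ s ih =>
    obtain ⟨d, hd⟩ := f.exists_head?_emap hne x
    obtain ⟨q, hq⟩ := List.head?_eq_some_iff.1 hd
    simp only [iterMap, Function.iterate_succ_apply, mapPath, List.flatMap_cons, hq,
      List.flatMap_nil, List.append_nil, List.cons_append] at ih ⊢
    rw [ih, ih d q]

theorem head?_iterMap_succ (f : GraphMap G G) (hne : ∀ e, f.emap e ≠ []) (s : ℕ) {x d : G.E}
    (hd : (f.emap x).head? = some d) :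
    (f.iterMap (s + 1) [x]).head? = (f.iterMap s [d]).head? := by
  obtain ⟨q, hq⟩ := List.head?_eq_some_iff.1 hd
  rw [iterMap, Function.iterate_succ_apply, mapPath_singleton, hq]
  exact f.head?_iterMap_cons hne s d q

end GraphMap

theorem IsComp.mapPath {G G' G'' : TTGraph} {h : GraphMap G G''} {g : GraphMap G' G''}
    {f : GraphMap G G'} (hc : IsComp h g f) (l : List G.E) :
    h.mapPath l = g.mapPath (f.mapPath l) := by
  simp only [GraphMap.mapPath, List.flatMap_assoc, funext hc.2]

section Gates

variable {G : TTGraph} {S : GateStruct G}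

/-- The derivative map `Df` (first edge of the image) is well defined on the gates of `S`. -/
def InducesGateMap (S : GateStruct G) (f : GraphMap G G) : Prop :=
  ∀ p q dp dq, S.rel p q → (f.emap p).head? = some dp → (f.emap q).head? = some dq → S.rel dp dq

theorem inducesGateMap_of_intrinsic {f : GraphMap G G} (hne : ∀ e, f.emap e ≠ [])
    (hSf : ∀ e e', S.rel e e' ↔ IntrinsicRel f e e') : InducesGateMap S f := by
  intro p q dp dq hpq hp hq
  obtain ⟨hinit, t, ht, d, hd₁, hd₂⟩ := (hSf p q).1 hpq
  obtain ⟨s, rfl⟩ : ∃ s, t = s + 1 := ⟨t - 1, by omega⟩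
  rw [f.head?_iterMap_succ hne s hp] at hd₁
  rw [f.head?_iterMap_succ hne s hq] at hd₂
  rcases s with _ | s
  · cases Option.some.inj (hd₁.trans hd₂.symm)
    exact S.refl dp
  · refine (hSf dp dq).2 ⟨?_, s + 1, by omega, d, hd₁, hd₂⟩
    rw [f.emap_head p dp hp, f.emap_head q dq hq, hinit]

theorem GateStable.inducesGateMap {g : GraphMap G G} (hgs : GateStable S g) :
    InducesGateMap S g :=
  fun p q _ _ hpq hp hq => S.trans (S.symm (hgs.2 p _ hp)) (S.trans hpq (hgs.2 q _ hq))

namespace CrossesGT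

theorem symm {l : List G.E} {a b : G.E} (h : CrossesGT S l a b) : CrossesGT S l b a := by
  obtain ⟨x, y, hxy, hr⟩ := h
  exact ⟨x, y, hxy, hr.symm⟩

theorem of_rel {l : List G.E} {a' b' a b : G.E} (h : CrossesGT S l a' b') (ha : S.rel a' a)
    (hb : S.rel b' b) : CrossesGT S l a b := by
  obtain ⟨x, y, hxy, ⟨h₁, h₂⟩ | ⟨h₁, h₂⟩⟩ := h
  · exact ⟨x, y, hxy, .inl ⟨S.trans h₁ ha, S.trans h₂ hb⟩⟩
  · exact ⟨x, y, hxy, .inr ⟨S.trans h₁ hb, S.trans h₂ ha⟩⟩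

theorem of_infix {l m : List G.E} {a b : G.E} (h : CrossesGT S l a b) (hlm : l <:+: m) :
    CrossesGT S m a b := by
  obtain ⟨x, y, hxy, hr⟩ := h
  exact ⟨x, y, hxy.trans hlm, hr⟩

theorem of_pair_infix {l : List G.E} {p q : G.E} (h : [p, q] <:+: l) :
    CrossesGT S l (G.bar p) q :=
  ⟨p, q, h, .inl ⟨S.refl _, S.refl _⟩⟩

theorem not_singleton (e a b : G.E) : ¬ CrossesGT S [e] a b := by
  rintro ⟨x, y, hxy, -⟩
  simpa using hxy.length_le

theorem reverse_map_bar {l : List G.E} {a b : G.E} (h : CrossesGT S l a b) :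
    CrossesGT S (l.reverse.map G.bar) a b := by
  obtain ⟨x, y, hxy, hr⟩ := h
  refine ⟨G.bar y, G.bar x, by simpa using (List.reverse_infix.2 hxy).map G.bar, ?_⟩
  rw [G.bar_bar]
  exact hr.symm.imp And.symm And.symm

theorem emap_bar (f : GraphMap G G) {c a b : G.E} (h : CrossesGT S (f.emap c) a b) :
    CrossesGT S (f.emap (G.bar c)) a b :=
  f.emap_bar c ▸ h.reverse_map_bar

theorem mapPath_of_mem (f : GraphMap G G) {c a b : G.E} {l : List G.E} (hc : c ∈ l)
    (h : CrossesGT S (f.emap c) a b) : CrossesGT S (f.mapPath l) a b :=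
  h.of_infix (List.infix_flatMap_of_mem hc f.emap)

theorem mapPath {f : GraphMap G G} (hne : ∀ e, f.emap e ≠ []) (hD : InducesGateMap S f)
    {l : List G.E} {a' b' da db : G.E} (h : CrossesGT S l a' b')
    (hda : (f.emap a').head? = some da) (hdb : (f.emap b').head? = some db) :
    CrossesGT S (f.mapPath l) da db := by
  obtain ⟨x, y, hxy, hr⟩ := h
  obtain ⟨u, w, huw, hu, hw⟩ := f.pair_infix_mapPath hne hxy
  have hbu := f.head?_emap_bar hu
  refine ⟨u, w, huw, ?_⟩
  rcases hr with ⟨h₁, h₂⟩ | ⟨h₁, h₂⟩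
  · exact .inl ⟨hD _ _ _ _ h₁ hbu hda, hD _ _ _ _ h₂ hw hdb⟩
  · exact .inr ⟨hD _ _ _ _ h₁ hbu hdb, hD _ _ _ _ h₂ hw hda⟩

theorem mapPath_of_gateStable {g : GraphMap G G} (hne : ∀ e, g.emap e ≠ [])
    (hgs : GateStable S g) {l : List G.E} {a b : G.E} (h : CrossesGT S l a b) :
    CrossesGT S (g.mapPath l) a b := by
  obtain ⟨da, hda⟩ := g.exists_head?_emap hne a
  obtain ⟨db, hdb⟩ := g.exists_head?_emap hne b
  exact (h.mapPath hne hgs.inducesGateMap hda hdb).of_rel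
    (S.symm (hgs.2 a da hda)) (S.symm (hgs.2 b db hdb))

theorem of_mapPath {f : GraphMap G G} (hne : ∀ e, f.emap e ≠ []) {l : List G.E} {a b : G.E}
    (h : CrossesGT S (f.mapPath l) a b) :
    (∃ c ∈ l, CrossesGT S (f.emap c) a b) ∨
      ∃ a' b' da db, CrossesGT S l a' b' ∧ (f.emap a').head? = some da ∧
        (f.emap b').head? = some db ∧ S.rel da a ∧ S.rel db b := by
  obtain ⟨u, w, huw, hr⟩ := h
  rcases List.pair_infix_flatMap hne huw with ⟨c, hc, hin⟩ | ⟨p, q, hpq, hu, hw⟩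
  · exact .inl ⟨c, hc, u, w, hin, hr⟩
  have hbu := f.head?_emap_bar hu
  have hcross : CrossesGT S l (G.bar p) q := of_pair_infix hpq
  rcases hr with ⟨h₁, h₂⟩ | ⟨h₁, h₂⟩
  · exact .inr ⟨G.bar p, q, G.bar u, w, hcross, hbu, hw, h₁, h₂⟩
  · exact .inr ⟨q, G.bar p, w, G.bar u, hcross.symm, hw, hbu, h₂, h₁⟩

end CrossesGT

end Gates

section Whitehead

variable {G : TTGraph} {S : GateStruct G}

def IsWhTurn (S : GateStruct G) (h : GraphMap G G) (a b : G.E) : Prop :=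
  ∃ t, 1 ≤ t ∧ ∃ e, CrossesGT S (h.iterMap t [e]) a b

namespace IsWhTurn

theorem of_edge_of_step {f h : GraphMap G G} (hne : ∀ e, f.emap e ≠ [])
    (hedge : ∀ c a b, CrossesGT S (f.emap c) a b → IsWhTurn S h a b)
    (hstep : ∀ l a' b' da db, CrossesGT S l a' b' → (f.emap a').head? = some da →
      (f.emap b').head? = some db → CrossesGT S (h.mapPath l) da db)
    {a b : G.E} (hf : IsWhTurn S f a b) : IsWhTurn S h a b := by
  obtain ⟨t, -, e, hcross⟩ := hf
  induction t generalizing a b with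
  | zero => exact absurd hcross (CrossesGT.not_singleton e a b)
  | succ t ih =>
    rw [f.iterMap_succ] at hcross
    rcases CrossesGT.of_mapPath hne hcross with
      ⟨c, -, hc⟩ | ⟨a', b', da, db, hcross', hda, hdb, ha, hb⟩
    · exact hedge c a b hc
    · obtain ⟨s, -, e', he'⟩ := ih hcross'
      refine ⟨s + 1, by omega, e', ?_⟩
      rw [h.iterMap_succ]
      exact (hstep _ _ _ _ _ he' hda hdb).of_rel ha hb

theorem precomp_gateStable {f g h : GraphMap G G} (hne_f : ∀ e, f.emap e ≠ [])
    (hD : InducesGateMap S f) (hne_g : ∀ e, g.emap e ≠ []) (hgs : GateStable S g)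
    (hsurj : ∀ e, ∃ e', e ∈ g.emap e' ∨ G.bar e ∈ g.emap e') (hc : IsComp h f g)
    {a b : G.E} (hf : IsWhTurn S f a b) : IsWhTurn S h a b := by
  refine hf.of_edge_of_step hne_f (fun c a b hcross => ?_) fun l _ _ _ _ hl hda hdb => ?_
  · obtain ⟨c', hc'⟩ := hsurj c
    refine ⟨1, le_rfl, c', ?_⟩
    change CrossesGT S (h.mapPath [c']) a b
    rw [hc.mapPath, g.mapPath_singleton]
    rcases hc' with hmem | hmem
    · exact hcross.mapPath_of_mem f hmem
    · exact (hcross.emap_bar f).mapPath_of_mem f hmem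
  · rw [hc.mapPath]
    exact (hl.mapPath_of_gateStable hne_g hgs).mapPath hne_f hD hda hdb

theorem postcomp_gateStable {f g h : GraphMap G G} (hne_f : ∀ e, f.emap e ≠ [])
    (hD : InducesGateMap S f) (hne_g : ∀ e, g.emap e ≠ []) (hgs : GateStable S g)
    (hc : IsComp h g f) {a b : G.E} (hf : IsWhTurn S f a b) : IsWhTurn S h a b := by
  refine hf.of_edge_of_step hne_f (fun c a b hcross => ⟨1, le_rfl, c, ?_⟩)
    fun l _ _ _ _ hl hda hdb => ?_
  · change CrossesGT S (h.mapPath [c]) a b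
    rw [hc.mapPath, f.mapPath_singleton]
    exact hcross.mapPath_of_gateStable hne_g hgs
  · rw [hc.mapPath]
    exact (hl.mapPath hne_f hD hda hdb).mapPath_of_gateStable hne_g hgs

end IsWhTurn

end Whitehead

/-- for train track self-morphisms `f, g` with respect to
`S = G(f)`, where `g` is gate-stable and induces an automorphism of `π₁(Γ)`
(whence — the graph having no valence-1 vertices — every edge occurs in the
image of some edge under `g`), the gate-Whitehead-graph of `f` at every vertex
is a subgraph of those of `f ∘ g` (= `h₁`) and of `g ∘ f` (= `h₂`). -/
theorem whitehead_subgraph {G : TTGraph} (S : GateStruct G)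
    (f g h₁ h₂ : GraphMap G G)
    (hTTf : IsTT S S f) (hSf : ∀ e e', S.rel e e' ↔ IntrinsicRel f e e')
    (hTTg : IsTT S S g) (hgs : GateStable S g)
    (hsurj : ∀ e, ∃ e', e ∈ g.emap e' ∨ G.bar e ∈ g.emap e')
    (h1 : IsComp h₁ f g) (h2 : IsComp h₂ g f) :
    ∀ v a b, WhEdge S f v a b → WhEdge S h₁ v a b ∧ WhEdge S h₂ v a b := by
  have hD : InducesGateMap S f := inducesGateMap_of_intrinsic hTTf.1 hSf
  rintro v a b ⟨ha, hb, hwh⟩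
  exact ⟨⟨ha, hb, IsWhTurn.precomp_gateStable hTTf.1 hD hTTg.1 hgs hsurj h1 hwh⟩,
    ⟨ha, hb, IsWhTurn.postcomp_gateStable hTTf.1 hD hTTg.1 hgs h2 hwh⟩⟩
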